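/- Let A → M be a Lie algebroid and σ: A → T*M a vector bundle map. Define Φ: A ⊕ T*M → TM ⊕ T*M by Φ(a, θ) = (ρ(a), σ(a) + θ). Then Φ is a morphism from the degenerate Courant algebroid A ⊕ T*M to the standard Courant algebroid TM ⊕ T*M (preserving anchors, pairings and brackets) if and only if σ is an IM-2-form, i.e. ⟨ρ(a1), σ(a2)⟩ = −⟨ρ(a2), σ(a1)⟩ and σ[a1,a2] = L_{ρ(a1)}σ(a2) − ι_{ρ(a2)}dσ(a1) for all a1, a2 ∈ Γ(A). -/

import Mathlib

/-! Algebraic model of differential geometry: the "functions" form a commutative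
ℝ-algebra `R`, vector fields are `ℝ`-derivations of `R`, and one-forms are the
`R`-dual of the module of vector fields. -/

variable (R : Type*) [CommRing R] [Algebra ℝ R]

/-- Vector fields on the "manifold" with function algebra `R`. -/
abbrev VF := Derivation ℝ R R

/-- One-forms: the `R`-dual of the module of vector fields. -/
abbrev OneForm := VF R →ₗ[R] R

variable {R}

lemma vf_bracket_smul (X Y : VF R) (f : R) :
    ⁅X, f • Y⁆ = f • ⁅X, Y⁆ + (X f) • Y := by
  ext a
  simp only [Derivation.commutator_apply, Derivation.smul_apply, smul_eq_mul,
    Derivation.leibniz, Derivation.add_apply]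
  ring

/-- The differential of a function, as a one-form. -/
noncomputable def dF (f : R) : OneForm R where
  toFun X := X f
  map_add' X Y := rfl
  map_smul' r X := rfl

/-- The Lie derivative of a one-form along a vector field. -/
noncomputable def lieD (X : VF R) (θ : OneForm R) : OneForm R where
  toFun Y := X (θ Y) - θ ⁅X, Y⁆
  map_add' Y Z := by simp only [map_add, lie_add]; ring
  map_smul' f Y := by
    simp only [map_smul, smul_eq_mul, vf_bracket_smul, map_add, Derivation.leibniz,
      RingHom.id_apply]
    ring

/-- The interior product `ι_Y (dθ)` of the exterior differential of a one-form. -/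
noncomputable def iotaD (Y : VF R) (θ : OneForm R) : OneForm R where
  toFun X := Y (θ X) - X (θ Y) - θ ⁅Y, X⁆
  map_add' X Z := by simp only [map_add, lie_add, Derivation.add_apply]; ring
  map_smul' f X := by
    simp only [map_smul, smul_eq_mul, vf_bracket_smul, map_add, Derivation.leibniz,
      Derivation.smul_apply, RingHom.id_apply]
    ring

/-- The Courant–Dorfman bracket on sections of `TM ⊕ T*M`. -/
noncomputable def cbracket (e₁ e₂ : VF R × OneForm R) : VF R × OneForm R :=
  (⁅e₁.1, e₂.1⁆, lieD e₁.1 e₂.2 - iotaD e₂.1 e₁.2)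

/-- The canonical symmetric pairing on sections of `TM ⊕ T*M`. -/
noncomputable def cpair (e₁ e₂ : VF R × OneForm R) : R := e₁.2 e₂.1 + e₂.2 e₁.1

/-- A Lie algebroid (in the algebraic section model): an `R`-module `A` with a Lie
bracket on sections and an anchor `ρ : A → TM` satisfying the Leibniz rule and
preserving brackets. -/
structure LieAlgebroid (R : Type*) [CommRing R] [Algebra ℝ R]
    (A : Type*) [AddCommGroup A] [Module R A] where
  bracket : A → A → A
  bracket_add_left : ∀ a b c, bracket (a + b) c = bracket a c + bracket b c
  bracket_add_right : ∀ a b c, bracket a (b + c) = bracket a b + bracket a c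
  skew : ∀ a b, bracket a b = - bracket b a
  jacobi : ∀ a b c,
    bracket a (bracket b c) = bracket (bracket a b) c + bracket b (bracket a c)
  anchor : A →ₗ[R] VF R
  leibniz : ∀ a (f : R) b, bracket a (f • b) = f • bracket a b + (anchor a f) • b
  anchor_bracket : ∀ a b, anchor (bracket a b) = ⁅anchor a, anchor b⁆

variable {A : Type*} [AddCommGroup A] [Module R A]

/-- The pairing of the degenerate Courant algebroid `A ⊕ T*M`:
`⟨(a₁,θ₁),(a₂,θ₂)⟩_d = θ₂(ρ a₁) + θ₁(ρ a₂)`. -/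
noncomputable def dpair (L : LieAlgebroid R A) (τ₁ τ₂ : A × OneForm R) : R :=
  τ₂.2 (L.anchor τ₁.1) + τ₁.2 (L.anchor τ₂.1)

/-- The bracket of the degenerate Courant algebroid `A ⊕ T*M`:
`[(a₁,θ₁),(a₂,θ₂)]_d = ([a₁,a₂], L_{ρ a₁} θ₂ − ι_{ρ a₂} dθ₁)`. -/
noncomputable def dbracket (L : LieAlgebroid R A) (τ₁ τ₂ : A × OneForm R) :
    A × OneForm R :=
  (L.bracket τ₁.1 τ₂.1, lieD (L.anchor τ₁.1) τ₂.2 - iotaD (L.anchor τ₂.1) τ₁.2)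

/-! Writing `Φ(a, θ) = (ρ a, σ a + θ)`, both sides of each compatibility condition differ
by a term depending only on the `A`-components: the pairings differ by
`σ a₁ (ρ a₂) + σ a₂ (ρ a₁)`, and, since `ρ` preserves brackets and `lieD`, `iotaD` are additive
in the form, the brackets differ by `σ [a₁, a₂] - (L_{ρ a₁} σ a₂ - ι_{ρ a₂} dσ a₁)`.
Preservation is thus exactly the vanishing of these two terms, i.e. the IM-2-form conditions. -/

lemma lieD_add (X : VF R) (θ η : OneForm R) : lieD X (θ + η) = lieD X θ + lieD X η := by
  ext Y
  simp only [lieD, LinearMap.add_apply, LinearMap.coe_mk, AddHom.coe_mk, map_add]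
  ring

lemma iotaD_add (Y : VF R) (θ η : OneForm R) : iotaD Y (θ + η) = iotaD Y θ + iotaD Y η := by
  ext X
  simp only [iotaD, LinearMap.add_apply, LinearMap.coe_mk, AddHom.coe_mk, map_add]
  ring

variable (L : LieAlgebroid R A) (σ : A →ₗ[R] OneForm R)

def courantMap (τ : A × OneForm R) : VF R × OneForm R := (L.anchor τ.1, σ τ.1 + τ.2)

lemma cpair_courantMap (τ₁ τ₂ : A × OneForm R) :
    cpair (courantMap L σ τ₁) (courantMap L σ τ₂) =
      dpair L τ₁ τ₂ + (σ τ₁.1 (L.anchor τ₂.1) + σ τ₂.1 (L.anchor τ₁.1)) := by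
  simp only [cpair, dpair, courantMap, LinearMap.add_apply]
  ring

lemma courantMap_pair_iff :
    (∀ τ₁ τ₂ : A × OneForm R,
      cpair (courantMap L σ τ₁) (courantMap L σ τ₂) = dpair L τ₁ τ₂) ↔
    ∀ a₁ a₂ : A, σ a₂ (L.anchor a₁) = - σ a₁ (L.anchor a₂) := by
  simp only [cpair_courantMap, add_eq_left, Prod.forall, forall_const]
  exact forall₂_congr fun a₁ a₂ => by rw [eq_neg_iff_add_eq_zero, add_comm]

lemma cbracket_courantMap (τ₁ τ₂ : A × OneForm R) :
    cbracket (courantMap L σ τ₁) (courantMap L σ τ₂) =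
      (L.anchor (L.bracket τ₁.1 τ₂.1),
        (lieD (L.anchor τ₁.1) (σ τ₂.1) - iotaD (L.anchor τ₂.1) (σ τ₁.1)) +
          (dbracket L τ₁ τ₂).2) := by
  refine Prod.ext (L.anchor_bracket _ _).symm ?_
  simp only [cbracket, dbracket, courantMap, lieD_add, iotaD_add]
  abel

lemma courantMap_dbracket (τ₁ τ₂ : A × OneForm R) :
    courantMap L σ (dbracket L τ₁ τ₂) =
      (L.anchor (L.bracket τ₁.1 τ₂.1), σ (L.bracket τ₁.1 τ₂.1) + (dbracket L τ₁ τ₂).2) :=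
  rfl

lemma courantMap_bracket_iff :
    (∀ τ₁ τ₂ : A × OneForm R,
      courantMap L σ (dbracket L τ₁ τ₂) = cbracket (courantMap L σ τ₁) (courantMap L σ τ₂)) ↔
    ∀ a₁ a₂ : A,
      σ (L.bracket a₁ a₂) = lieD (L.anchor a₁) (σ a₂) - iotaD (L.anchor a₂) (σ a₁) := by
  simp only [courantMap_dbracket, cbracket_courantMap, Prod.mk.injEq, add_left_inj, true_and,
    Prod.forall, forall_const]

/-- For a Lie algebroid `A → M` and a vector bundle map `σ : A → T*M`,
the map `Φ : A ⊕ T*M → TM ⊕ T*M`, `Φ(a,θ) = (ρ(a), σ(a) + θ)`, is a morphism from the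
degenerate Courant algebroid `A ⊕ T*M` to the standard Courant algebroid `TM ⊕ T*M`
(preserving anchors, pairings and brackets) if and only if `σ` is an IM-2-form, i.e.
`⟨ρ(a₁), σ(a₂)⟩ = −⟨ρ(a₂), σ(a₁)⟩` and
`σ[a₁,a₂] = L_{ρ(a₁)}σ(a₂) − ι_{ρ(a₂)}dσ(a₁)` for all `a₁, a₂ ∈ Γ(A)`. -/
theorem im_two_form_iff_courant_morphism (R : Type*) [CommRing R] [Algebra ℝ R]
    {A : Type*} [AddCommGroup A] [Module R A]
    (L : LieAlgebroid R A) (σ : A →ₗ[R] OneForm R) :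
    -- `Φ` preserves anchors, pairings and brackets …
    ((∀ τ : A × OneForm R, (L.anchor τ.1, σ τ.1 + τ.2).1 = L.anchor τ.1) ∧
     (∀ τ₁ τ₂ : A × OneForm R,
        cpair (L.anchor τ₁.1, σ τ₁.1 + τ₁.2) (L.anchor τ₂.1, σ τ₂.1 + τ₂.2)
          = dpair L τ₁ τ₂) ∧
     (∀ τ₁ τ₂ : A × OneForm R,
        (L.anchor (dbracket L τ₁ τ₂).1, σ (dbracket L τ₁ τ₂).1 + (dbracket L τ₁ τ₂).2)
          = cbracket (L.anchor τ₁.1, σ τ₁.1 + τ₁.2) (L.anchor τ₂.1, σ τ₂.1 + τ₂.2)))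
    ↔
    -- … if and only if `σ` is an IM-2-form.
    ((∀ a₁ a₂ : A, σ a₂ (L.anchor a₁) = - σ a₁ (L.anchor a₂)) ∧
     (∀ a₁ a₂ : A,
        σ (L.bracket a₁ a₂) = lieD (L.anchor a₁) (σ a₂) - iotaD (L.anchor a₂) (σ a₁))) :=
  (and_iff_right fun _ => rfl).trans
    (and_congr (courantMap_pair_iff L σ) (courantMap_bracket_iff L σ))
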